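/- arXiv:1710.07115 — 3 statements merged into one kernel-verified Lean document; each statement's English description precedes it below -/
import Mathlib

section
/- For the single-armed hidden-Markov bandit with subsidy (either the rested or the restless model), if the availability functions do not depend on the belief, i.e. θ^a(π,y) = θ^a(y) for all π, then for every fixed subsidy w the value functions V_S, V_NS, Ṽ_S, Ṽ_NS, V and Ṽ are convex functions of the belief π on [0,1]. -/
/-!
Single-armed hidden-Markov bandit with subsidy (rested or restless model).

`θ a y π` is the availability probability `θ^a(π, y)` where `a` is the action
(`true` = play), `y` is the current availability (`true` = available), and `π`
is the belief (probability that the hidden state is 0).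
-/

structure BanditParams where
  /-- `true` for the rested model, `false` for the restless model. -/
  rested : Bool
  β : ℝ
  η0 : ℝ
  r0 : ℝ
  η1 : ℝ
  r1 : ℝ
  μ0 : ℝ
  μ1 : ℝ
  θ : Bool → Bool → ℝ → ℝ

namespace BanditParams

variable (P : BanditParams)

/-- Expected immediate reward (= success probability) when playing an available arm. -/
noncomputable def ρ (π : ℝ) : ℝ := π * P.r0 + (1 - π) * P.r1

/-- Expected immediate reward when playing an unavailable arm. -/
noncomputable def ξ (π : ℝ) : ℝ := π * P.η0 + (1 - π) * P.η1

/-- Bayes belief update after a successful play of an available arm. -/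
noncomputable def γ11 (π : ℝ) : ℝ :=
  (π * P.r0 * P.μ0 + (1 - π) * P.r1 * P.μ1) / (π * P.r0 + (1 - π) * P.r1)

/-- Bayes belief update after an unsuccessful play of an available arm. -/
noncomputable def γ01 (π : ℝ) : ℝ :=
  (π * (1 - P.r0) * P.μ0 + (1 - π) * (1 - P.r1) * P.μ1) /
    (π * (1 - P.r0) + (1 - π) * (1 - P.r1))

/-- Belief update after a successful play of an unavailable arm. -/
noncomputable def γ10 (π : ℝ) : ℝ := if P.rested then π else P.γ11 π

/-- Belief update after an unsuccessful play of an unavailable arm. -/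
noncomputable def γ00 (π : ℝ) : ℝ := if P.rested then π else P.γ01 π

/-- Belief update when an available arm is not played. -/
noncomputable def Γ1 (π : ℝ) : ℝ := if P.rested then π else π * P.μ0 + (1 - π) * P.μ1

/-- Belief update when an unavailable arm is not played. -/
noncomputable def Γ0 (_P : BanditParams) (π : ℝ) : ℝ := π

/-- Standing assumptions on the model parameters. -/
structure Valid : Prop where
  hβ0 : 0 < P.β
  hβ1 : P.β < 1
  hη0 : 0 ≤ P.η0
  hη0r0 : P.η0 < P.r0
  hr0η1 : P.r0 < P.η1
  hη1r1 : P.η1 < P.r1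
  hr1 : P.r1 ≤ 1
  hμ0 : P.μ0 ∈ Set.Icc (0 : ℝ) 1
  hμ1 : P.μ1 ∈ Set.Icc (0 : ℝ) 1
  hθ : ∀ a y π, π ∈ Set.Icc (0 : ℝ) 1 → P.θ a y π ∈ Set.Icc (0 : ℝ) 1

/-- `VS, VNS, VtS, VtNS, V, Vt` form the (unique bounded) solution of the dynamic
program for subsidy `w`: `VS = V_S`, `VNS = V_NS`, `VtS = Ṽ_S`, `VtNS = Ṽ_NS`,
`V = max (V_S, V_NS)`, `Vt = max (Ṽ_S, Ṽ_NS)`. -/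
structure IsSolution (w : ℝ) (VS VNS VtS VtNS V Vt : ℝ → ℝ) : Prop where
  bounded : ∃ M, ∀ π ∈ Set.Icc (0 : ℝ) 1, |V π| ≤ M ∧ |Vt π| ≤ M
  eqVS : ∀ π ∈ Set.Icc (0 : ℝ) 1, VS π =
    P.ρ π + P.β * (P.ρ π * (P.θ true true π * V (P.γ11 π)
        + (1 - P.θ true true π) * Vt (P.γ11 π))
      + (1 - P.ρ π) * (P.θ true true π * V (P.γ01 π)
        + (1 - P.θ true true π) * Vt (P.γ01 π)))
  eqVNS : ∀ π ∈ Set.Icc (0 : ℝ) 1, VNS π =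
    w + P.β * (P.θ false true π * V (P.Γ1 π) + (1 - P.θ false true π) * Vt (P.Γ1 π))
  eqVtS : ∀ π ∈ Set.Icc (0 : ℝ) 1, VtS π =
    P.ξ π + P.β * (P.ρ π * (P.θ true false π * V (P.γ10 π)
        + (1 - P.θ true false π) * Vt (P.γ10 π))
      + (1 - P.ρ π) * (P.θ true false π * V (P.γ00 π)
        + (1 - P.θ true false π) * Vt (P.γ00 π)))
  eqVtNS : ∀ π ∈ Set.Icc (0 : ℝ) 1, VtNS π =
    w + P.β * (P.θ false false π * V (P.Γ0 π) + (1 - P.θ false false π) * Vt (P.Γ0 π))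
  eqV : ∀ π ∈ Set.Icc (0 : ℝ) 1, V π = max (VS π) (VNS π)
  eqVt : ∀ π ∈ Set.Icc (0 : ℝ) 1, Vt π = max (VtS π) (VtNS π)

end BanditParams

open Set BanditParams

/-!
With availability independent of the belief, the dynamic-programming operator preserves
convexity of the pair `(V, Ṽ)`: the expected continuation value after a play,
`ρ(π) g(γ11(π)) + (1 - ρ(π)) g(γ01(π))`, is a sum of two perspectives `l * g (u / l)` of `g`
composed with affine maps of `π` (the observation probabilities `l` and the unnormalised
posteriors `u` are affine in the prior), the restless transition `Γ1` is affine, and a maximum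
of convex functions is convex. The operator is a `β`-contraction for the sup-distance on
`[0, 1]`, so value iteration from `0` converges pointwise to the bounded solution `(V, Ṽ)`,
and convexity survives pointwise limits. Finally `V_S, …, Ṽ_NS` are the operator's branches
applied to the convex pair `(V, Ṽ)`.
-/

open Filter Topology

theorem ConvexOn.of_tendsto {ι E : Type*} [AddCommMonoid E] [Module ℝ E] {l : Filter ι}
    [l.NeBot] {s : Set E} {f : ι → E → ℝ} {g : E → ℝ} (hf : ∀ i, ConvexOn ℝ s (f i))
    (hfg : ∀ x ∈ s, Tendsto (fun i => f i x) l (𝓝 (g x))) : ConvexOn ℝ s g := by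
  obtain ⟨i⟩ := l.nonempty_of_neBot
  refine ⟨(hf i).1, fun x hx y hy a b ha hb hab => ?_⟩
  exact le_of_tendsto_of_tendsto' (hfg _ ((hf i).1 hx hy ha hb hab))
    (((hfg x hx).const_smul a).add ((hfg y hy).const_smul b))
    fun i => (hf i).2 hx hy ha hb hab

/-- The perspective `(l, u) ↦ l * g (u / l)` of a convex `g` is convex; with the convention
`u / 0 = 0` this also holds on the boundary `l = 0`. -/
theorem ConvexOn.perspective_le {s : Set ℝ} {g : ℝ → ℝ} (hg : ConvexOn ℝ s g)
    {l₁ l₂ c₁ c₂ a b : ℝ} (hl₁ : 0 ≤ l₁) (hl₂ : 0 ≤ l₂) (hc₁ : c₁ ∈ s) (hc₂ : c₂ ∈ s)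
    (ha : 0 ≤ a) (hb : 0 ≤ b) :
    (a * l₁ + b * l₂) * g ((a * (l₁ * c₁) + b * (l₂ * c₂)) / (a * l₁ + b * l₂)) ≤
      a * (l₁ * g c₁) + b * (l₂ * g c₂) := by
  have h₁ : 0 ≤ a * l₁ := mul_nonneg ha hl₁
  have h₂ : 0 ≤ b * l₂ := mul_nonneg hb hl₂
  rcases (add_nonneg h₁ h₂).eq_or_lt with hL | hL
  · have e₁ : a * l₁ = 0 := by linarith
    have e₂ : b * l₂ = 0 := by linarith
    rw [← hL, zero_mul, ← mul_assoc, ← mul_assoc, e₁, e₂]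
    simp
  · have hsum : a * l₁ / (a * l₁ + b * l₂) + b * l₂ / (a * l₁ + b * l₂) = 1 := by
      field_simp
    have key := hg.2 hc₁ hc₂ (div_nonneg h₁ hL.le) (div_nonneg h₂ hL.le) hsum
    simp only [smul_eq_mul] at key
    calc (a * l₁ + b * l₂) * g ((a * (l₁ * c₁) + b * (l₂ * c₂)) / (a * l₁ + b * l₂))
        = (a * l₁ + b * l₂) * g (a * l₁ / (a * l₁ + b * l₂) * c₁
            + b * l₂ / (a * l₁ + b * l₂) * c₂) := by congr 2; field_simp
      _ ≤ (a * l₁ + b * l₂) * (a * l₁ / (a * l₁ + b * l₂) * g c₁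
            + b * l₂ / (a * l₁ + b * l₂) * g c₂) := mul_le_mul_of_nonneg_left key hL.le
      _ = a * (l₁ * g c₁) + b * (l₂ * g c₂) := by field_simp

section Bayes

variable {π p q m₀ m₁ : ℝ}

theorem bayes_bounds (hπ : π ∈ Icc (0 : ℝ) 1) (hp : 0 ≤ p) (hq : 0 ≤ q)
    (hm₀ : m₀ ∈ Icc (0 : ℝ) 1) (hm₁ : m₁ ∈ Icc (0 : ℝ) 1) :
    0 ≤ π * p * m₀ + (1 - π) * q * m₁ ∧
      π * p * m₀ + (1 - π) * q * m₁ ≤ π * p + (1 - π) * q := by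
  have h₀ : 0 ≤ π * p := mul_nonneg hπ.1 hp
  have h₁ : 0 ≤ (1 - π) * q := mul_nonneg (sub_nonneg.2 hπ.2) hq
  exact ⟨add_nonneg (mul_nonneg h₀ hm₀.1) (mul_nonneg h₁ hm₁.1), by nlinarith [hm₀.2, hm₁.2]⟩

theorem bayes_mem (hπ : π ∈ Icc (0 : ℝ) 1) (hp : 0 ≤ p) (hq : 0 ≤ q)
    (hm₀ : m₀ ∈ Icc (0 : ℝ) 1) (hm₁ : m₁ ∈ Icc (0 : ℝ) 1) :
    (π * p * m₀ + (1 - π) * q * m₁) / (π * p + (1 - π) * q) ∈ Icc (0 : ℝ) 1 := by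
  obtain ⟨h₀, h₁⟩ := bayes_bounds hπ hp hq hm₀ hm₁
  exact ⟨div_nonneg h₀ (h₀.trans h₁), div_le_one_of_le₀ h₁ (h₀.trans h₁)⟩

theorem mul_bayes (hπ : π ∈ Icc (0 : ℝ) 1) (hp : 0 ≤ p) (hq : 0 ≤ q)
    (hm₀ : m₀ ∈ Icc (0 : ℝ) 1) (hm₁ : m₁ ∈ Icc (0 : ℝ) 1) :
    (π * p + (1 - π) * q) * ((π * p * m₀ + (1 - π) * q * m₁) / (π * p + (1 - π) * q)) =
      π * p * m₀ + (1 - π) * q * m₁ := by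
  obtain ⟨h₀, h₁⟩ := bayes_bounds hπ hp hq hm₀ hm₁
  exact mul_div_cancel_of_imp' fun h => le_antisymm (h ▸ h₁) h₀

end Bayes

/-- `π ↦ P(observation) * g(posterior)` is the perspective of `g` composed with an affine map. -/
theorem ConvexOn.mul_comp_bayes {g : ℝ → ℝ} (hg : ConvexOn ℝ (Icc (0 : ℝ) 1) g)
    {p q m₀ m₁ : ℝ} (hp : 0 ≤ p) (hq : 0 ≤ q) (hm₀ : m₀ ∈ Icc (0 : ℝ) 1)
    (hm₁ : m₁ ∈ Icc (0 : ℝ) 1) :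
    ConvexOn ℝ (Icc (0 : ℝ) 1) fun π =>
      (π * p + (1 - π) * q) * g ((π * p * m₀ + (1 - π) * q * m₁) / (π * p + (1 - π) * q)) := by
  refine ⟨convex_Icc 0 1, fun x hx y hy a b ha hb hab => ?_⟩
  have hS : (a * x + b * y) * p + (1 - (a * x + b * y)) * q =
      a * (x * p + (1 - x) * q) + b * (y * p + (1 - y) * q) := by
    linear_combination (-q) * hab
  have hU : (a * x + b * y) * p * m₀ + (1 - (a * x + b * y)) * q * m₁ =
      a * (x * p * m₀ + (1 - x) * q * m₁) + b * (y * p * m₀ + (1 - y) * q * m₁) := by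
    linear_combination (-(q * m₁)) * hab
  have hSx := bayes_bounds hx hp hq hm₀ hm₁
  have hSy := bayes_bounds hy hp hq hm₀ hm₁
  have key := hg.perspective_le (hSx.1.trans hSx.2) (hSy.1.trans hSy.2)
    (bayes_mem hx hp hq hm₀ hm₁) (bayes_mem hy hp hq hm₀ hm₁) ha hb
  rw [mul_bayes hx hp hq hm₀ hm₁, mul_bayes hy hp hq hm₀ hm₁] at key
  simp only [smul_eq_mul]
  rwa [hS, hU]

theorem convexOn_affine_comb {s : Set ℝ} (hs : Convex ℝ s) (a b : ℝ) :
    ConvexOn ℝ s fun π => π * a + (1 - π) * b := by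
  refine ⟨hs, fun x _ y _ c d _ _ hcd => le_of_eq ?_⟩
  simp only [smul_eq_mul]
  linear_combination (-b) * hcd

theorem abs_mul_add_one_sub_mul_le {t a b D : ℝ} (ht : t ∈ Icc (0 : ℝ) 1) (ha : |a| ≤ D)
    (hb : |b| ≤ D) : |t * a + (1 - t) * b| ≤ D := by
  have ht₀ := ht.1
  have ht₁ := sub_nonneg.2 ht.2
  rw [abs_le] at *
  constructor <;> nlinarith

theorem abs_const_add_mul_sub_le {c β X X' D : ℝ} (hβ : 0 ≤ β) (h : |X - X'| ≤ D) :
    |(c + β * X) - (c + β * X')| ≤ β * D := by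
  rw [add_sub_add_left_eq_sub, ← mul_sub, abs_mul, abs_of_nonneg hβ]
  exact mul_le_mul_of_nonneg_left h hβ

theorem tendsto_of_abs_sub_le_geometric {u : ℕ → ℝ} {a r M : ℝ} (hr₀ : 0 ≤ r) (hr₁ : r < 1)
    (h : ∀ n, |a - u n| ≤ r ^ n * M) : Tendsto u atTop (𝓝 a) := by
  have hM : Tendsto (fun n => r ^ n * M) atTop (𝓝 0) := by
    simpa using (tendsto_pow_atTop_nhds_zero_of_lt_one hr₀ hr₁).mul_const M
  refine tendsto_iff_norm_sub_tendsto_zero.2 (squeeze_zero (fun n => norm_nonneg _) (fun n => ?_) hM)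
  rw [Real.norm_eq_abs, abs_sub_comm]
  exact h n

section PairsOfFunctions

/-- `U = (V, Ṽ)` holds the values of an available and of an unavailable arm, and `t` is the
probability that the arm is available in the next slot. -/
def mix (t : ℝ) (U : (ℝ → ℝ) × (ℝ → ℝ)) (x : ℝ) : ℝ := t * U.1 x + (1 - t) * U.2 x

def SupDistLE (D : ℝ) (U U' : (ℝ → ℝ) × (ℝ → ℝ)) : Prop :=
  ∀ x ∈ Icc (0 : ℝ) 1, |U.1 x - U'.1 x| ≤ D ∧ |U.2 x - U'.2 x| ≤ D

variable {t D x : ℝ} {U U' : (ℝ → ℝ) × (ℝ → ℝ)}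

theorem convexOn_mix {s : Set ℝ} (ht : t ∈ Icc (0 : ℝ) 1) (h₁ : ConvexOn ℝ s U.1)
    (h₂ : ConvexOn ℝ s U.2) : ConvexOn ℝ s (mix t U) :=
  (h₁.smul ht.1).add (h₂.smul (sub_nonneg.2 ht.2))

theorem abs_mix_sub_le (ht : t ∈ Icc (0 : ℝ) 1) (hD : SupDistLE D U U')
    (hx : x ∈ Icc (0 : ℝ) 1) : |mix t U x - mix t U' x| ≤ D := by
  have := abs_mul_add_one_sub_mul_le ht (hD x hx).1 (hD x hx).2
  convert this using 2
  unfold mix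
  ring

theorem abs_weighted_mix_sub_le {s y : ℝ} (hs : s ∈ Icc (0 : ℝ) 1) (ht : t ∈ Icc (0 : ℝ) 1)
    (hD : SupDistLE D U U') (hx : x ∈ Icc (0 : ℝ) 1) (hy : y ∈ Icc (0 : ℝ) 1) :
    |(s * mix t U x + (1 - s) * mix t U y) - (s * mix t U' x + (1 - s) * mix t U' y)| ≤ D := by
  have := abs_mul_add_one_sub_mul_le hs (abs_mix_sub_le ht hD hx) (abs_mix_sub_le ht hD hy)
  convert this using 2
  ring

end PairsOfFunctions

namespace BanditParams

variable {P : BanditParams} {π : ℝ}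

theorem one_sub_ρ (π : ℝ) : 1 - P.ρ π = π * (1 - P.r0) + (1 - π) * (1 - P.r1) := by
  unfold ρ
  ring

namespace Valid

theorem r0_pos (hP : P.Valid) : 0 < P.r0 := hP.hη0.trans_lt hP.hη0r0

theorem r0_le_one (hP : P.Valid) : P.r0 ≤ 1 := by linarith [hP.hr0η1, hP.hη1r1, hP.hr1]

theorem r1_pos (hP : P.Valid) : 0 < P.r1 := by linarith [hP.r0_pos, hP.hr0η1, hP.hη1r1]

theorem ρ_mem (hP : P.Valid) (hπ : π ∈ Icc (0 : ℝ) 1) : P.ρ π ∈ Icc (0 : ℝ) 1 :=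
  convex_Icc 0 1 ⟨hP.r0_pos.le, hP.r0_le_one⟩ ⟨hP.r1_pos.le, hP.hr1⟩ hπ.1
    (sub_nonneg.2 hπ.2) (add_sub_cancel _ _)

theorem γ11_mem (hP : P.Valid) (hπ : π ∈ Icc (0 : ℝ) 1) : P.γ11 π ∈ Icc (0 : ℝ) 1 :=
  bayes_mem hπ hP.r0_pos.le hP.r1_pos.le hP.hμ0 hP.hμ1

theorem γ01_mem (hP : P.Valid) (hπ : π ∈ Icc (0 : ℝ) 1) : P.γ01 π ∈ Icc (0 : ℝ) 1 :=
  bayes_mem hπ (sub_nonneg.2 hP.r0_le_one) (sub_nonneg.2 hP.hr1) hP.hμ0 hP.hμ1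

theorem γ10_mem (hP : P.Valid) (hπ : π ∈ Icc (0 : ℝ) 1) : P.γ10 π ∈ Icc (0 : ℝ) 1 := by
  unfold γ10
  split_ifs
  exacts [hπ, hP.γ11_mem hπ]

theorem γ00_mem (hP : P.Valid) (hπ : π ∈ Icc (0 : ℝ) 1) : P.γ00 π ∈ Icc (0 : ℝ) 1 := by
  unfold γ00
  split_ifs
  exacts [hπ, hP.γ01_mem hπ]

theorem Γ1_mem (hP : P.Valid) (hπ : π ∈ Icc (0 : ℝ) 1) : P.Γ1 π ∈ Icc (0 : ℝ) 1 := by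
  unfold Γ1
  split_ifs
  exacts [hπ, convex_Icc 0 1 hP.hμ0 hP.hμ1 hπ.1 (sub_nonneg.2 hπ.2) (add_sub_cancel _ _)]

theorem convexOn_posteriorAverage (hP : P.Valid) {g : ℝ → ℝ}
    (hg : ConvexOn ℝ (Icc (0 : ℝ) 1) g) :
    ConvexOn ℝ (Icc (0 : ℝ) 1) fun π => P.ρ π * g (P.γ11 π) + (1 - P.ρ π) * g (P.γ01 π) := by
  refine ((hg.mul_comp_bayes hP.r0_pos.le hP.r1_pos.le hP.hμ0 hP.hμ1).add
    (hg.mul_comp_bayes (sub_nonneg.2 hP.r0_le_one) (sub_nonneg.2 hP.hr1) hP.hμ0 hP.hμ1)).congr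
    fun π _ => ?_
  simp only [Pi.add_apply, one_sub_ρ]
  rfl

theorem convexOn_posteriorAverage_unavailable (hP : P.Valid) {g : ℝ → ℝ}
    (hg : ConvexOn ℝ (Icc (0 : ℝ) 1) g) :
    ConvexOn ℝ (Icc (0 : ℝ) 1) fun π => P.ρ π * g (P.γ10 π) + (1 - P.ρ π) * g (P.γ00 π) := by
  cases hr : P.rested
  · simpa [γ10, γ00, hr] using hP.convexOn_posteriorAverage hg
  · refine hg.congr fun π _ => ?_
    simp only [γ10, γ00, hr, if_true]
    ring

theorem convexOn_comp_Γ1 (hP : P.Valid) {g : ℝ → ℝ} (hg : ConvexOn ℝ (Icc (0 : ℝ) 1) g) :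
    ConvexOn ℝ (Icc (0 : ℝ) 1) fun π => g (P.Γ1 π) := by
  cases hr : P.rested
  -- the restless transition is a Bayes update with an uninformative observation
  · simpa [Γ1, hr] using hg.mul_comp_bayes zero_le_one zero_le_one hP.hμ0 hP.hμ1
  · simpa [Γ1, hr] using hg

end Valid

section DynamicProgram

variable (P)

/-- `QS U`, `QNS w U`, `QtS U`, `QtNS w U` are the right-hand sides of the dynamic program for
`V_S`, `V_NS`, `Ṽ_S`, `Ṽ_NS`, evaluated at `U = (V, Ṽ)`. -/
noncomputable def QS (U : (ℝ → ℝ) × (ℝ → ℝ)) (π : ℝ) : ℝ :=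
  P.ρ π + P.β * (P.ρ π * mix (P.θ true true π) U (P.γ11 π)
    + (1 - P.ρ π) * mix (P.θ true true π) U (P.γ01 π))

noncomputable def QNS (w : ℝ) (U : (ℝ → ℝ) × (ℝ → ℝ)) (π : ℝ) : ℝ :=
  w + P.β * mix (P.θ false true π) U (P.Γ1 π)

noncomputable def QtS (U : (ℝ → ℝ) × (ℝ → ℝ)) (π : ℝ) : ℝ :=
  P.ξ π + P.β * (P.ρ π * mix (P.θ true false π) U (P.γ10 π)
    + (1 - P.ρ π) * mix (P.θ true false π) U (P.γ00 π))

noncomputable def QtNS (w : ℝ) (U : (ℝ → ℝ) × (ℝ → ℝ)) (π : ℝ) : ℝ :=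
  w + P.β * mix (P.θ false false π) U (P.Γ0 π)

noncomputable def bellman (w : ℝ) (U : (ℝ → ℝ) × (ℝ → ℝ)) : (ℝ → ℝ) × (ℝ → ℝ) :=
  (fun π => max (P.QS U π) (P.QNS w U π), fun π => max (P.QtS U π) (P.QtNS w U π))

end DynamicProgram

theorem Valid.supDistLE_bellman (hP : P.Valid) (w : ℝ) {D : ℝ} {U U' : (ℝ → ℝ) × (ℝ → ℝ)}
    (h : SupDistLE D U U') : SupDistLE (P.β * D) (P.bellman w U) (P.bellman w U') := by
  intro π hπ
  have hβ := hP.hβ0.le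
  have hS : |P.QS U π - P.QS U' π| ≤ P.β * D := abs_const_add_mul_sub_le hβ
    (abs_weighted_mix_sub_le (hP.ρ_mem hπ) (hP.hθ _ _ _ hπ) h (hP.γ11_mem hπ) (hP.γ01_mem hπ))
  have hNS : |P.QNS w U π - P.QNS w U' π| ≤ P.β * D :=
    abs_const_add_mul_sub_le hβ (abs_mix_sub_le (hP.hθ _ _ _ hπ) h (hP.Γ1_mem hπ))
  have htS : |P.QtS U π - P.QtS U' π| ≤ P.β * D := abs_const_add_mul_sub_le hβ
    (abs_weighted_mix_sub_le (hP.ρ_mem hπ) (hP.hθ _ _ _ hπ) h (hP.γ10_mem hπ) (hP.γ00_mem hπ))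
  have htNS : |P.QtNS w U π - P.QtNS w U' π| ≤ P.β * D :=
    abs_const_add_mul_sub_le hβ (abs_mix_sub_le (hP.hθ _ _ _ hπ) h hπ)
  exact ⟨(abs_max_sub_max_le_max _ _ _ _).trans (max_le hS hNS),
    (abs_max_sub_max_le_max _ _ _ _).trans (max_le htS htNS)⟩

theorem Valid.supDistLE_iterate (hP : P.Valid) {w D : ℝ} {U U' : (ℝ → ℝ) × (ℝ → ℝ)}
    (hfix : ∀ x ∈ Icc (0 : ℝ) 1, (P.bellman w U).1 x = U.1 x ∧ (P.bellman w U).2 x = U.2 x)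
    (h : SupDistLE D U U') (n : ℕ) : SupDistLE (P.β ^ n * D) U ((P.bellman w)^[n] U') := by
  induction n with
  | zero => simpa using h
  | succ n ih =>
    intro x hx
    rw [Function.iterate_succ_apply', ← (hfix x hx).1, ← (hfix x hx).2, pow_succ', mul_assoc]
    exact hP.supDistLE_bellman w ih x hx

section BeliefIndependent

variable {V Vt : ℝ → ℝ}

theorem Valid.convexOn_mix_θ (hP : P.Valid) (a y : Bool) (hV : ConvexOn ℝ (Icc (0 : ℝ) 1) V)
    (hVt : ConvexOn ℝ (Icc (0 : ℝ) 1) Vt) :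
    ConvexOn ℝ (Icc (0 : ℝ) 1) (mix (P.θ a y 0) (V, Vt)) :=
  convexOn_mix (hP.hθ a y 0 ⟨le_rfl, zero_le_one⟩) hV hVt

theorem Valid.convexOn_QS (hP : P.Valid) (hθ : ∀ a y π π', P.θ a y π = P.θ a y π')
    (hV : ConvexOn ℝ (Icc (0 : ℝ) 1) V) (hVt : ConvexOn ℝ (Icc (0 : ℝ) 1) Vt) :
    ConvexOn ℝ (Icc (0 : ℝ) 1) (P.QS (V, Vt)) := by
  refine ((convexOn_affine_comb (convex_Icc 0 1) P.r0 P.r1).add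
    ((hP.convexOn_posteriorAverage (hP.convexOn_mix_θ true true hV hVt)).smul
      hP.hβ0.le)).congr fun π _ => ?_
  simp only [QS, hθ true true π 0]
  rfl

theorem Valid.convexOn_QtS (hP : P.Valid) (hθ : ∀ a y π π', P.θ a y π = P.θ a y π')
    (hV : ConvexOn ℝ (Icc (0 : ℝ) 1) V) (hVt : ConvexOn ℝ (Icc (0 : ℝ) 1) Vt) :
    ConvexOn ℝ (Icc (0 : ℝ) 1) (P.QtS (V, Vt)) := by
  refine ((convexOn_affine_comb (convex_Icc 0 1) P.η0 P.η1).add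
    ((hP.convexOn_posteriorAverage_unavailable (hP.convexOn_mix_θ true false hV hVt)).smul
      hP.hβ0.le)).congr fun π _ => ?_
  simp only [QtS, hθ true false π 0]
  rfl

theorem Valid.convexOn_QNS (hP : P.Valid) (hθ : ∀ a y π π', P.θ a y π = P.θ a y π') (w : ℝ)
    (hV : ConvexOn ℝ (Icc (0 : ℝ) 1) V) (hVt : ConvexOn ℝ (Icc (0 : ℝ) 1) Vt) :
    ConvexOn ℝ (Icc (0 : ℝ) 1) (P.QNS w (V, Vt)) := by
  refine (((hP.convexOn_comp_Γ1 (hP.convexOn_mix_θ false true hV hVt)).smul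
      hP.hβ0.le).add_const w).congr fun π _ => ?_
  simp only [QNS, hθ false true π 0, smul_eq_mul, Pi.add_apply]
  ring

theorem Valid.convexOn_QtNS (hP : P.Valid) (hθ : ∀ a y π π', P.θ a y π = P.θ a y π') (w : ℝ)
    (hV : ConvexOn ℝ (Icc (0 : ℝ) 1) V) (hVt : ConvexOn ℝ (Icc (0 : ℝ) 1) Vt) :
    ConvexOn ℝ (Icc (0 : ℝ) 1) (P.QtNS w (V, Vt)) := by
  refine (((hP.convexOn_mix_θ false false hV hVt).smul hP.hβ0.le).add_const w).congr
    fun π _ => ?_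
  simp only [QtNS, Γ0, hθ false false π 0, smul_eq_mul, Pi.add_apply]
  ring

theorem Valid.convexOn_bellman (hP : P.Valid) (hθ : ∀ a y π π', P.θ a y π = P.θ a y π')
    (w : ℝ) {U : (ℝ → ℝ) × (ℝ → ℝ)}
    (hU : ConvexOn ℝ (Icc (0 : ℝ) 1) U.1 ∧ ConvexOn ℝ (Icc (0 : ℝ) 1) U.2) :
    ConvexOn ℝ (Icc (0 : ℝ) 1) (P.bellman w U).1 ∧ ConvexOn ℝ (Icc (0 : ℝ) 1) (P.bellman w U).2 :=
  ⟨(hP.convexOn_QS hθ hU.1 hU.2).sup (hP.convexOn_QNS hθ w hU.1 hU.2),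
    (hP.convexOn_QtS hθ hU.1 hU.2).sup (hP.convexOn_QtNS hθ w hU.1 hU.2)⟩

theorem Valid.convexOn_iterate_bellman (hP : P.Valid) (hθ : ∀ a y π π', P.θ a y π = P.θ a y π')
    (w : ℝ) (n : ℕ) :
    ConvexOn ℝ (Icc (0 : ℝ) 1) ((P.bellman w)^[n] 0).1 ∧
      ConvexOn ℝ (Icc (0 : ℝ) 1) ((P.bellman w)^[n] 0).2 := by
  induction n with
  | zero => exact ⟨convexOn_const 0 (convex_Icc 0 1), convexOn_const 0 (convex_Icc 0 1)⟩
  | succ n ih =>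
    rw [Function.iterate_succ_apply']
    exact hP.convexOn_bellman hθ w ih

end BeliefIndependent

namespace IsSolution

variable {w : ℝ} {VS VNS VtS VtNS V Vt : ℝ → ℝ}

theorem bellman_apply (hsol : P.IsSolution w VS VNS VtS VtNS V Vt) {x : ℝ}
    (hx : x ∈ Icc (0 : ℝ) 1) : (P.bellman w (V, Vt)).1 x = V x ∧ (P.bellman w (V, Vt)).2 x = Vt x :=
  ⟨by rw [hsol.eqV x hx, hsol.eqVS x hx, hsol.eqVNS x hx]; rfl,
    by rw [hsol.eqVt x hx, hsol.eqVtS x hx, hsol.eqVtNS x hx]; rfl⟩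

theorem tendsto_iterate_bellman (hsol : P.IsSolution w VS VNS VtS VtNS V Vt) (hP : P.Valid)
    {x : ℝ} (hx : x ∈ Icc (0 : ℝ) 1) :
    Tendsto (fun n => ((P.bellman w)^[n] 0).1 x) atTop (𝓝 (V x)) ∧
      Tendsto (fun n => ((P.bellman w)^[n] 0).2 x) atTop (𝓝 (Vt x)) := by
  obtain ⟨M, hM⟩ := hsol.bounded
  have hM' : SupDistLE M (V, Vt) 0 := fun y hy => by simpa using hM y hy
  have h := hP.supDistLE_iterate (fun y hy => hsol.bellman_apply hy) hM'
  exact ⟨tendsto_of_abs_sub_le_geometric hP.hβ0.le hP.hβ1 fun n => (h n x hx).1,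
    tendsto_of_abs_sub_le_geometric hP.hβ0.le hP.hβ1 fun n => (h n x hx).2⟩

end IsSolution

end BanditParams

/-- If the availability functions do not depend on the belief, then for
every fixed subsidy `w` all six value functions are convex in the belief `π` on `[0,1]`. -/
theorem convexity_in_belief (P : BanditParams) (hP : P.Valid)
    (hθconst : ∀ a y π π', P.θ a y π = P.θ a y π')
    (w : ℝ) (VS VNS VtS VtNS V Vt : ℝ → ℝ)
    (hsol : P.IsSolution w VS VNS VtS VtNS V Vt) :
    ConvexOn ℝ (Icc (0 : ℝ) 1) VS ∧ ConvexOn ℝ (Icc (0 : ℝ) 1) VNS ∧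
      ConvexOn ℝ (Icc (0 : ℝ) 1) VtS ∧ ConvexOn ℝ (Icc (0 : ℝ) 1) VtNS ∧
      ConvexOn ℝ (Icc (0 : ℝ) 1) V ∧ ConvexOn ℝ (Icc (0 : ℝ) 1) Vt := by
  have hV : ConvexOn ℝ (Icc (0 : ℝ) 1) V :=
    ConvexOn.of_tendsto (fun n => (hP.convexOn_iterate_bellman hθconst w n).1)
      fun x hx => (hsol.tendsto_iterate_bellman hP hx).1
  have hVt : ConvexOn ℝ (Icc (0 : ℝ) 1) Vt :=
    ConvexOn.of_tendsto (fun n => (hP.convexOn_iterate_bellman hθconst w n).2)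
      fun x hx => (hsol.tendsto_iterate_bellman hP hx).2
  exact ⟨(hP.convexOn_QS hθconst hV hVt).congr fun π hπ => (hsol.eqVS π hπ).symm,
    (hP.convexOn_QNS hθconst w hV hVt).congr fun π hπ => (hsol.eqVNS π hπ).symm,
    (hP.convexOn_QtS hθconst hV hVt).congr fun π hπ => (hsol.eqVtS π hπ).symm,
    (hP.convexOn_QtNS hθconst w hV hVt).congr fun π hπ => (hsol.eqVtNS π hπ).symm, hV, hVt⟩
end

section
/- For the rested single-armed bandit with availability process (θ^0(π,0) = 0): for every π ∈ [0,1] and subsidy w ∈ ℝ, if (π,1) ∈ G(w), i.e. V_S(π; w) ≤ V_NS(π; w), then V(π; w) = max{ E^{φ0}_{π,1}[ Σ_{t=1}^{∞} β^{t−1}( w·1{Y(t)=1} + ξ(π)·1{Y(t)=0} ) ], w/(1 − β) }, where φ0 is the policy that rests the arm whenever it is available and plays it whenever it is unavailable; under φ0 the belief remains π for all time (the rested arm's state is frozen whenever it is unavailable or not played), and the availability chain (Y(t))_{t≥1} starts at Y(1) = 1 and evolves as: from Y(t) = 1 (arm rested) the next availability equals 1 with probability θ^0(π,1), and from Y(t)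 = 0 (arm played) the next availability equals 1 with probability θ^1(π,0). -/
open Set BanditParams


/-- Availability process `Y(t)` (`t = n+1` in the paper's indexing) as a function of the
sequence of availability outcomes: `Y(1) = 1`, and thereafter the `n`-th outcome. -/
def restAvail (ω : ℕ → Bool) : ℕ → Bool
  | 0 => true
  | n + 1 => ω n

/-- One-step transition probability of the availability chain under the policy `φ0`
(rest when available, play when unavailable): from `y = 1` the arm is rested, so the
next availability is `1` with probability `θ^0(π,1)`; from `y = 0` the arm is played,
so the next availability is `1` with probability `θ^1(π,0)`. -/
noncomputable def restStepP (P : BanditParams) (π : ℝ) (y a : Bool) : ℝ :=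
  if y then (if a then P.θ false true π else 1 - P.θ false true π)
  else (if a then P.θ true false π else 1 - P.θ true false π)

/-- Extend a finite outcome history to an infinite one. -/
def extendB {n : ℕ} (h : Fin n → Bool) : ℕ → Bool :=
  fun i => if hi : i < n then h ⟨i, hi⟩ else false

/-- Probability weight of the first `n` steps of the availability chain under `φ0`. -/
noncomputable def restWeight (P : BanditParams) (π : ℝ) (ω : ℕ → Bool) (n : ℕ) : ℝ :=
  ∏ i ∈ Finset.range n, restStepP P π (restAvail ω i) (ω i)

/-- `E^{φ0}_{π,1}[ Σ_{t=1}^∞ β^{t−1} ( w·1{Y(t)=1} + ξ(π)·1{Y(t)=0} ) ]`: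
the total expected discounted reward of the policy `φ0` started from `(π, 1)`
(under `φ0` the belief stays `π` forever, since the arm is rested). -/
noncomputable def restValue (P : BanditParams) (w π : ℝ) : ℝ :=
  ∑' n : ℕ, P.β ^ n * ∑ h : Fin n → Bool,
    restWeight P π (extendB h) n * (if restAvail (extendB h) n then w else P.ξ π)

/-!
At the belief `π` the rested dynamics freeze the belief, so with `a1 = θ^0(π,1)` and
`a0 = θ^1(π,0)` the optimality equations at `(π,1) ∈ G(w)` read
`V = w + β (a1 V + (1 - a1) Ṽ)` and `Ṽ = max (ξ + β (a0 V + (1 - a0) Ṽ)) (w + β Ṽ)`.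
Hence `(V, Ṽ)` is a supersolution of the evaluation equations of `φ0`, and
`Ṽ ≥ w / (1 - β)`, so `V` dominates both terms of the maximum. Whichever branch attains
the maximum defining `Ṽ` turns the corresponding inequality into an equation, which pins
`V` down to that term.
A supersolution `(x, y)` dominates the value of `φ0` because
`e n = P(Y(n+1) = 1) x + P(Y(n+1) = 0) y`
satisfies `r n + β e (n + 1) ≤ e n`, which telescopes along the discounted reward sum.
-/

open Filter Topology

theorem tendsto_pow_mul_of_bounded {β C : ℝ} {e : ℕ → ℝ} (hβ0 : 0 ≤ β) (hβ1 : β < 1)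
    (he : ∀ n, |e n| ≤ C) : Tendsto (fun n => β ^ n * e n) atTop (𝓝 0) := by
  have hC : Tendsto (fun n => β ^ n * C) atTop (𝓝 0) := by
    simpa using (tendsto_pow_atTop_nhds_zero_of_lt_one hβ0 hβ1).mul_const C
  refine squeeze_zero_norm (fun n => ?_) hC
  rw [Real.norm_eq_abs, abs_mul, abs_of_nonneg (pow_nonneg hβ0 n)]
  exact mul_le_mul_of_nonneg_left (he n) (pow_nonneg hβ0 n)

theorem le_of_hasSum_discounted_of_step_le {β R C : ℝ} {r e : ℕ → ℝ} (hβ0 : 0 ≤ β)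
    (hβ1 : β < 1) (hR : HasSum (fun n => β ^ n * r n) R) (he : ∀ n, |e n| ≤ C)
    (hstep : ∀ n, r n + β * e (n + 1) ≤ e n) : R ≤ e 0 := by
  have hpartial : ∀ N, ∑ n ∈ Finset.range N, β ^ n * r n ≤ e 0 - β ^ N * e N := by
    intro N
    induction N with
    | zero => simp
    | succ N ih =>
      rw [Finset.sum_range_succ]
      have := mul_le_mul_of_nonneg_left (hstep N) (pow_nonneg hβ0 N)
      linear_combination ih + this
  have hlim : Tendsto (fun N => e 0 - β ^ N * e N) atTop (𝓝 (e 0)) := by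
    simpa using (tendsto_pow_mul_of_bounded hβ0 hβ1 he).const_sub (e 0)
  exact le_of_tendsto_of_tendsto' hR.tendsto_sum_nat hlim hpartial

/-- `P(Y(n+1) = 1)` for the two-state availability chain started at `1` that moves to `1`
with probability `a1` from `1` and with probability `a0` from `0`. -/
noncomputable def availProb (a1 a0 : ℝ) : ℕ → ℝ
  | 0 => 1
  | n + 1 => a1 * availProb a1 a0 n + a0 * (1 - availProb a1 a0 n)

theorem availProb_mem_Icc {a1 a0 : ℝ} (h1 : a1 ∈ Icc (0 : ℝ) 1) (h0 : a0 ∈ Icc (0 : ℝ) 1)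
    (n : ℕ) : availProb a1 a0 n ∈ Icc (0 : ℝ) 1 := by
  obtain ⟨h1a, h1b⟩ := h1
  obtain ⟨h0a, h0b⟩ := h0
  induction n with
  | zero => simp [availProb]
  | succ n ih =>
    obtain ⟨ha, hb⟩ := ih
    simp only [availProb, mem_Icc]
    constructor <;> nlinarith

theorem abs_mul_add_one_sub_mul_le_s9 {p x y : ℝ} (hp0 : 0 ≤ p) (hp1 : p ≤ 1) :
    |p * x + (1 - p) * y| ≤ |x| + |y| :=
  calc |p * x + (1 - p) * y| ≤ p * |x| + (1 - p) * |y| := by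
        refine (abs_add_le _ _).trans ?_
        rw [abs_mul, abs_mul, abs_of_nonneg hp0, abs_of_nonneg (sub_nonneg.2 hp1)]
    _ ≤ |x| + |y| := by nlinarith [abs_nonneg x, abs_nonneg y]

theorem hasSum_le_of_supersolution {β a1 a0 c1 c0 x y R : ℝ} (hβ0 : 0 ≤ β) (hβ1 : β < 1)
    (h1 : a1 ∈ Icc (0 : ℝ) 1) (h0 : a0 ∈ Icc (0 : ℝ) 1)
    (hR : HasSum (fun n => β ^ n *
      (availProb a1 a0 n * c1 + (1 - availProb a1 a0 n) * c0)) R)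
    (hx : c1 + β * (a1 * x + (1 - a1) * y) ≤ x) (hy : c0 + β * (a0 * x + (1 - a0) * y) ≤ y) :
    R ≤ x := by
  set p := availProb a1 a0
  have hp := availProb_mem_Icc h1 h0
  have hbound : ∀ n, |p n * x + (1 - p n) * y| ≤ |x| + |y| := fun n =>
    abs_mul_add_one_sub_mul_le_s9 (hp n).1 (hp n).2
  have hstep : ∀ n, (p n * c1 + (1 - p n) * c0) + β * (p (n + 1) * x + (1 - p (n + 1)) * y)
      ≤ p n * x + (1 - p n) * y := fun n => by
    obtain ⟨hp0, hp1⟩ := hp n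
    have hsucc : p (n + 1) = a1 * p n + a0 * (1 - p n) := rfl
    rw [hsucc]
    nlinarith [mul_le_mul_of_nonneg_left hx hp0, mul_le_mul_of_nonneg_left hy (sub_nonneg.2 hp1)]
  simpa [p, availProb] using le_of_hasSum_discounted_of_step_le hβ0 hβ1 hR hbound hstep

theorem le_hasSum_of_subsolution {β a1 a0 c1 c0 x y R : ℝ} (hβ0 : 0 ≤ β) (hβ1 : β < 1)
    (h1 : a1 ∈ Icc (0 : ℝ) 1) (h0 : a0 ∈ Icc (0 : ℝ) 1)
    (hR : HasSum (fun n => β ^ n *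
      (availProb a1 a0 n * c1 + (1 - availProb a1 a0 n) * c0)) R)
    (hx : x ≤ c1 + β * (a1 * x + (1 - a1) * y)) (hy : y ≤ c0 + β * (a0 * x + (1 - a0) * y)) :
    x ≤ R := by
  have hR' : HasSum (fun n => β ^ n *
      (availProb a1 a0 n * -c1 + (1 - availProb a1 a0 n) * -c0)) (-R) := by
    simpa only [mul_neg, ← neg_add] using hR.neg
  have := hasSum_le_of_supersolution (x := -x) (y := -y) hβ0 hβ1 h1 h0 hR'
    (by linarith) (by linarith)
  linarith

theorem div_one_sub_le_of_bellman {β a w x y : ℝ} (hβ0 : 0 ≤ β) (hβ1 : β < 1)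
    (ha : a ≤ 1) (hx : x = w + β * (a * x + (1 - a) * y)) (hy : w + β * y ≤ y) :
    w / (1 - β) ≤ x := by
  rw [div_le_iff₀ (by linarith)]
  have hβa := mul_nonneg hβ0 (sub_nonneg.2 ha)
  nlinarith [mul_nonneg hβa (sub_nonneg.2 hy)]

theorem eq_div_one_sub_of_bellman {β a w x y : ℝ} (hβ0 : 0 ≤ β) (hβ1 : β < 1)
    (ha : a ≤ 1) (hx : x = w + β * (a * x + (1 - a) * y)) (hy : y = w + β * y) :
    x = w / (1 - β) := by
  rw [eq_div_iff (by linarith)]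
  have hpos : 0 < 1 - β * a := by nlinarith
  have key : (x * (1 - β) - w) * (1 - β * a) = 0 := by
    linear_combination (1 - β) * hx + β * (1 - a) * hy
  rcases mul_eq_zero.mp key with h | h <;> linarith

theorem extendB_snoc_of_lt {n : ℕ} (h : Fin n → Bool) (b : Bool) {i : ℕ} (hi : i < n) :
    extendB (Fin.snoc h b : Fin (n + 1) → Bool) i = extendB h i := by
  simp [extendB, hi, Nat.lt_succ_of_lt hi, Fin.snoc, Fin.castLT]

theorem extendB_snoc_self {n : ℕ} (h : Fin n → Bool) (b : Bool) :
    extendB (Fin.snoc h b : Fin (n + 1) → Bool) n = b := by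
  simp [extendB, Fin.snoc]

theorem restAvail_extendB_snoc_of_le {n : ℕ} (h : Fin n → Bool) (b : Bool) {i : ℕ}
    (hi : i ≤ n) :
    restAvail (extendB (Fin.snoc h b : Fin (n + 1) → Bool)) i = restAvail (extendB h) i := by
  cases i with
  | zero => rfl
  | succ j => exact extendB_snoc_of_lt h b (by omega)

theorem restWeight_extendB_snoc (P : BanditParams) (π : ℝ) {n : ℕ} (h : Fin n → Bool)
    (b : Bool) :
    restWeight P π (extendB (Fin.snoc h b : Fin (n + 1) → Bool)) (n + 1)
      = restWeight P π (extendB h) n * restStepP P π (restAvail (extendB h) n) b := by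
  rw [restWeight, Finset.prod_range_succ, restAvail_extendB_snoc_of_le h b le_rfl,
    extendB_snoc_self]
  congr 1
  refine Finset.prod_congr rfl fun i hi => ?_
  rw [Finset.mem_range] at hi
  rw [restAvail_extendB_snoc_of_le h b hi.le, extendB_snoc_of_lt h b hi]

theorem sum_restWeight_mul (P : BanditParams) (π : ℝ) (f : Bool → ℝ) (n : ℕ) :
    ∑ h : Fin n → Bool, restWeight P π (extendB h) n * f (restAvail (extendB h) n)
      = availProb (P.θ false true π) (P.θ true false π) n * f true
        + (1 - availProb (P.θ false true π) (P.θ true false π) n) * f false := by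
  induction n generalizing f with
  | zero => simp [restWeight, availProb, restAvail]
  | succ n ih =>
    have hsnoc : ∀ (b : Bool) (h : Fin n → Bool),
        restWeight P π (extendB (Fin.snoc h b : Fin (n + 1) → Bool)) (n + 1)
          * f (restAvail (extendB (Fin.snoc h b : Fin (n + 1) → Bool)) (n + 1))
        = restWeight P π (extendB h) n * (restStepP P π (restAvail (extendB h) n) b * f b) := by
      intro b h
      rw [restWeight_extendB_snoc, restAvail, extendB_snoc_self, mul_assoc]
    have hequiv : ∀ (b : Bool) (h : Fin n → Bool),
        (Fin.snocEquiv fun _ => Bool) (b, h) = Fin.snoc h b := fun _ _ => rfl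
    rw [← (Fin.snocEquiv fun _ => Bool).sum_comp, Fintype.sum_prod_type]
    simp only [hequiv, hsnoc, Fintype.sum_bool]
    rw [ih fun y => restStepP P π y true * f true, ih fun y => restStepP P π y false * f false]
    simp only [restStepP, availProb, if_true, Bool.false_eq_true, if_false]
    ring

theorem hasSum_restValue (P : BanditParams) (hβ0 : 0 ≤ P.β) (hβ1 : P.β < 1) (w π : ℝ)
    (h1 : P.θ false true π ∈ Icc (0 : ℝ) 1) (h0 : P.θ true false π ∈ Icc (0 : ℝ) 1) :
    HasSum (fun n => P.β ^ n * (availProb (P.θ false true π) (P.θ true false π) n * w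
      + (1 - availProb (P.θ false true π) (P.θ true false π) n) * P.ξ π))
      (restValue P w π) := by
  have hp := availProb_mem_Icc h1 h0
  convert Summable.hasSum ?_ using 1
  · refine tsum_congr fun n => ?_
    rw [sum_restWeight_mul P π (fun y => if y then w else P.ξ π) n]
    simp only [if_true, Bool.false_eq_true, if_false]
  · refine ((summable_geometric_of_lt_one hβ0 hβ1).mul_right (|w| + |P.ξ π|)).of_norm_bounded
      fun n => ?_
    rw [Real.norm_eq_abs, abs_mul, abs_of_nonneg (pow_nonneg hβ0 n)]
    exact mul_le_mul_of_nonneg_left (abs_mul_add_one_sub_mul_le_s9 (hp n).1 (hp n).2)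
      (pow_nonneg hβ0 n)

/-- For the rested bandit with availability process (`θ^0(π,0) = 0`):
if `(π,1) ∈ G(w)`, i.e. `V_S(π) ≤ V_NS(π)`, then
`V(π) = max { E^{φ0}_{π,1}[Σ_t β^{t−1}(w·1{Y(t)=1} + ξ(π)·1{Y(t)=0})], w/(1−β) }`. -/
theorem value_available_in_G (P : BanditParams) (hP : P.Valid)
    (hrested : P.rested = true)
    (havail : ∀ π, P.θ false false π = 0)
    (w : ℝ) (VS VNS VtS VtNS V Vt : ℝ → ℝ)
    (hsol : P.IsSolution w VS VNS VtS VtNS V Vt)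
    (π : ℝ) (hπ : π ∈ Icc (0 : ℝ) 1)
    (hG : VS π ≤ VNS π) :
    V π = max (restValue P w π) (w / (1 - P.β)) := by
  have hβ0 := hP.hβ0.le
  have h1 := hP.hθ false true π hπ
  have h0 := hP.hθ true false π hπ
  have hR := hasSum_restValue P hβ0 hP.hβ1 w π h1 h0
  have hV : V π = w + P.β * (P.θ false true π * V π + (1 - P.θ false true π) * Vt π) := by
    have h := (hsol.eqV π hπ).trans ((max_eq_right hG).trans (hsol.eqVNS π hπ))
    rwa [Γ1, hrested, if_pos rfl] at h
  have hVtS :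
      VtS π = P.ξ π + P.β * (P.θ true false π * V π + (1 - P.θ true false π) * Vt π) := by
    rw [hsol.eqVtS π hπ]
    simp only [γ10, γ00, hrested, if_true]
    ring
  have hVtNS : VtNS π = w + P.β * Vt π := by
    rw [hsol.eqVtNS π hπ, havail, Γ0]
    ring
  have hVt := hsol.eqVt π hπ
  refine le_antisymm ?_ (max_le ?_ ?_)
  · rcases max_choice (VtS π) (VtNS π) with hS | hNS
    · exact (le_hasSum_of_subsolution hβ0 hP.hβ1 h1 h0 hR hV.le
        (hVt.trans (hS.trans hVtS)).le).trans (le_max_left _ _)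
    · exact (eq_div_one_sub_of_bellman hβ0 hP.hβ1 h1.2 hV
        (hVt.trans (hNS.trans hVtNS))).le.trans (le_max_right _ _)
  · exact hasSum_le_of_supersolution hβ0 hP.hβ1 h1 h0 hR hV.ge
      (hVtS.symm.le.trans ((le_max_left _ _).trans hVt.ge))
  · exact div_one_sub_le_of_bellman hβ0 hP.hβ1 h1.2 hV
      (hVtNS.symm.le.trans ((le_max_right _ _).trans hVt.ge))
end

section
/- (Convexity is preserved by the Bellman play-update.) Let 0 < r0 < r1 < 1, μ0, μ1 ∈ [0,1], β ∈ (0,1) and θ ∈ [0,1], and let f, g : [0,1] → ℝ be convex. Define ρ(π) = π r0 + (1−π) r1, γ11(π) = (π r0 μ0 + (1−π) r1 μ1)/(π r0 + (1−π) r1), γ01(π) = (π(1−r0)μ0 + (1−π)(1−r1)μ1)/(π(1−r0) + (1−π)(1−r1)). Then the function π ↦ ρ(π) + β[ ρ(π){ θ f(γ11(π)) + (1−θ) g(γ11(π)) } + (1−ρ(π)){ θ f(γ01(π)) + (1−θ) g(γ01(π)) } ] is convex on [0,1]. -/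
open Set AffineMap

/-!
If `h` is convex and `w`, `p` are affine with `w > 0`, then `x ↦ w x • h ((w x)⁻¹ • p x)` is
convex: it is the perspective of `h` composed with an affine map. Both continuation terms have
this shape: the weights `ρ` and `1 - ρ` are affine and positive in `π`, and so are the
numerators `ρ γ11` and `(1 - ρ) γ01`. The posteriors `γ11`, `γ01` are convex combinations of
`μ0` and `μ1`, hence stay in `[0,1]`, where the mixture `θ f + (1 - θ) g` is convex.
-/

theorem inv_lineMap_smul_lineMap_smul {𝕜 : Type*} [Field 𝕜] (a b x y t : 𝕜) :
    (lineMap a b t)⁻¹ • lineMap (a • x) (b • y) t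
      = (t * b * y + (1 - t) * a * x) / (t * b + (1 - t) * a) := by
  rw [lineMap_apply_ring, lineMap_apply_ring, smul_eq_mul, smul_eq_mul, smul_eq_mul, div_eq_inv_mul]
  ring

section Perspective

variable {𝕜 E F β : Type*} [Field 𝕜] [LinearOrder 𝕜] [IsStrictOrderedRing 𝕜]
  [AddCommGroup E] [Module 𝕜 E] [AddCommGroup F] [Module 𝕜 F]
  [AddCommGroup β] [PartialOrder β] [Module 𝕜 β] [PosSMulMono 𝕜 β]

theorem ConvexOn.perspective {s : Set F} {h : F → β} (hh : ConvexOn 𝕜 s h) {D : Set E}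
    (hD : Convex 𝕜 D) (w : E →ᵃ[𝕜] 𝕜) (p : E →ᵃ[𝕜] F) (hw : ∀ x ∈ D, 0 < w x)
    (hp : ∀ x ∈ D, (w x)⁻¹ • p x ∈ s) :
    ConvexOn 𝕜 D (fun x => w x • h ((w x)⁻¹ • p x)) := by
  refine ⟨hD, fun x hx y hy a b ha hb hab => ?_⟩
  set z := a • x + b • y
  have hwx := hw x hx
  have hwy := hw y hy
  have hwz : 0 < w z := hw z (hD hx hy ha hb hab)
  have hwz_eq : w z = a * w x + b * w y := Convex.combo_affine_apply hab
  have hpz_eq : p z = a • p x + b • p y := Convex.combo_affine_apply hab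
  set u := (w x)⁻¹ • p x
  set v := (w y)⁻¹ • p y
  have hsum : a * w x / w z + b * w y / w z = 1 := by
    rw [← add_div, ← hwz_eq, div_self hwz.ne']
  have hpersp : (w z)⁻¹ • p z = (a * w x / w z) • u + (b * w y / w z) • v := by
    simp only [u, v, hpz_eq, smul_add, smul_smul]
    congr 2 <;> field
  calc w z • h ((w z)⁻¹ • p z)
      ≤ w z • ((a * w x / w z) • h u + (b * w y / w z) • h v) := by
        rw [hpersp]
        exact smul_le_smul_of_nonneg_left
          (hh.2 (hp x hx) (hp y hy) (by positivity) (by positivity) hsum) hwz.le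
    _ = a • (w x • h u) + b • (w y • h v) := by
        simp only [smul_add, smul_smul]
        congr 2 <;> field

theorem Convex.inv_lineMap_smul_lineMap_smul_mem {s : Set F} (hs : Convex 𝕜 s) {a b : 𝕜}
    (ha : 0 < a) (hb : 0 < b) {x y : F} (hx : x ∈ s) (hy : y ∈ s) {t : 𝕜} (ht : t ∈ Icc 0 1) :
    (lineMap a b t)⁻¹ • lineMap (a • x) (b • y) t ∈ s := by
  have hw : 0 < (1 - t) * a + t * b := by
    simpa [lineMap_apply_ring] using (convex_Ioi 0).lineMap_mem ha hb ht
  convert convex_iff_div.1 hs hx hy (mul_nonneg (sub_nonneg.2 ht.2) ha.le)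
    (mul_nonneg ht.1 hb.le) hw using 1
  simp only [lineMap_apply_ring, lineMap_apply_module, smul_add, smul_smul, div_eq_inv_mul]

theorem ConvexOn.perspective_lineMap {s : Set F} {h : F → β} (hh : ConvexOn 𝕜 s h) {a b : 𝕜}
    (ha : 0 < a) (hb : 0 < b) {x y : F} (hx : x ∈ s) (hy : y ∈ s) :
    ConvexOn 𝕜 (Icc (0 : 𝕜) 1)
      (fun t => lineMap a b t • h ((lineMap a b t)⁻¹ • lineMap (a • x) (b • y) t)) :=
  hh.perspective (convex_Icc 0 1) (lineMap a b) (lineMap (a • x) (b • y))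
    (fun _ ht => (convex_Ioi 0).lineMap_mem ha hb ht)
    (fun _ ht => hh.1.inv_lineMap_smul_lineMap_smul_mem ha hb hx hy ht)

end Perspective

theorem bellman_play_update_convex_general (r0 r1 μ0 μ1 β θ : ℝ)
    (hr0 : 0 < r0) (hr01 : r0 < r1) (hr1 : r1 < 1)
    (hμ0 : μ0 ∈ Icc (0 : ℝ) 1) (hμ1 : μ1 ∈ Icc (0 : ℝ) 1)
    (hβ0 : 0 < β) (hθ : θ ∈ Icc (0 : ℝ) 1)
    (f g : ℝ → ℝ)
    (hf : ConvexOn ℝ (Icc (0 : ℝ) 1) f) (hg : ConvexOn ℝ (Icc (0 : ℝ) 1) g) :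
    ConvexOn ℝ (Icc (0 : ℝ) 1) (fun π : ℝ =>
      (π * r0 + (1 - π) * r1) +
        β * ((π * r0 + (1 - π) * r1) *
              (θ * f ((π * r0 * μ0 + (1 - π) * r1 * μ1) / (π * r0 + (1 - π) * r1))
                + (1 - θ) * g ((π * r0 * μ0 + (1 - π) * r1 * μ1) / (π * r0 + (1 - π) * r1)))
          + (1 - (π * r0 + (1 - π) * r1)) *
              (θ * f ((π * (1 - r0) * μ0 + (1 - π) * (1 - r1) * μ1) /
                  (π * (1 - r0) + (1 - π) * (1 - r1)))
                + (1 - θ) * g ((π * (1 - r0) * μ0 + (1 - π) * (1 - r1) * μ1) /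
                  (π * (1 - r0) + (1 - π) * (1 - r1)))))) := by
  have hmix : ConvexOn ℝ (Icc 0 1) (θ • f + (1 - θ) • g) :=
    (hf.smul hθ.1).add (hg.smul (sub_nonneg.2 hθ.2))
  have hρ : ConvexOn ℝ (Icc 0 1) (lineMap r1 r0 : ℝ → ℝ) :=
    ((convexOn_id convex_univ).comp_affineMap (lineMap r1 r0)).subset (subset_univ _)
      (convex_Icc 0 1)
  have hsucc := hmix.perspective_lineMap (hr0.trans hr01) hr0 hμ1 hμ0
  have hfail := hmix.perspective_lineMap (sub_pos.2 hr1) (sub_pos.2 (hr01.trans hr1)) hμ1 hμ0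
  refine (hρ.add ((hsucc.add hfail).smul hβ0.le)).congr fun π _ => ?_
  simp only [Pi.add_apply, Pi.smul_apply]
  rw [inv_lineMap_smul_lineMap_smul, inv_lineMap_smul_lineMap_smul]
  simp only [lineMap_apply_ring, smul_eq_mul]
  ring

/-- **Convexity is preserved by the Bellman play-update.**
Let `0 < r0 < r1 < 1`, `μ0, μ1 ∈ [0,1]`, `β ∈ (0,1)`, `θ ∈ [0,1]`, and let
`f, g : [0,1] → ℝ` be convex.  With `ρ(π) = π r0 + (1−π) r1` and the Bayes updates
`γ11, γ01`, the function
`π ↦ ρ(π) + β[ρ(π){θ f(γ11(π)) + (1−θ) g(γ11(π))} + (1−ρ(π)){θ f(γ01(π)) + (1−θ) g(γ01(π))}]`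
is convex on `[0,1]`. -/
theorem bellman_play_update_convex (r0 r1 μ0 μ1 β θ : ℝ)
    (hr0 : 0 < r0) (hr01 : r0 < r1) (hr1 : r1 < 1)
    (hμ0 : μ0 ∈ Icc (0 : ℝ) 1) (hμ1 : μ1 ∈ Icc (0 : ℝ) 1)
    (hβ0 : 0 < β) (hβ1 : β < 1) (hθ : θ ∈ Icc (0 : ℝ) 1)
    (f g : ℝ → ℝ)
    (hf : ConvexOn ℝ (Icc (0 : ℝ) 1) f) (hg : ConvexOn ℝ (Icc (0 : ℝ) 1) g) :
    ConvexOn ℝ (Icc (0 : ℝ) 1) (fun π : ℝ =>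
      (π * r0 + (1 - π) * r1) +
        β * ((π * r0 + (1 - π) * r1) *
              (θ * f ((π * r0 * μ0 + (1 - π) * r1 * μ1) / (π * r0 + (1 - π) * r1))
                + (1 - θ) * g ((π * r0 * μ0 + (1 - π) * r1 * μ1) / (π * r0 + (1 - π) * r1)))
          + (1 - (π * r0 + (1 - π) * r1)) *
              (θ * f ((π * (1 - r0) * μ0 + (1 - π) * (1 - r1) * μ1) /
                  (π * (1 - r0) + (1 - π) * (1 - r1)))
                + (1 - θ) * g ((π * (1 - r0) * μ0 + (1 - π) * (1 - r1) * μ1) /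
                  (π * (1 - r0) + (1 - π) * (1 - r1)))))) :=
  bellman_play_update_convex_general r0 r1 μ0 μ1 β θ hr0 hr01 hr1 hμ0 hμ1 hβ0 hθ f g hf hg
end
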